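/- For k ≥ 2, the Cartesian product graph G = C_{3k} □ P₂ satisfies SIC(G) = (2/3)·|V(G)| = 4k; that is, the minimum cardinality of a self-identifying code of C_{3k} □ P₂ equals 4k. -/

import Mathlib

/-!
For a vertex set `S` of `C_N □ P₂`, count the members of `S` in each horizontal window
`{(i - 1, j), (i, j), (i + 1, j)}`; every vertex lies in exactly three windows, so these counts
add up to `3 |S|`. If `S` is self-identifying, separating `(i, j)` from `(i, j + 1)` puts
`(i - 1, j)` or `(i + 1, j)` into `S`, and separating `(i, j)` from `(i - 1, j + 1)` puts `(i, j)`
or `(i + 1, j)` into `S`. So every window holds at least two members of `S`, and `3 |S| ≥ 4N`.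

Conversely, for `3 ∣ N` the columns `i ≢ 2 (mod 3)` meet every window in exactly two vertices,
and for `N ≥ 6` they form a self-identifying code: a vertex in a column `i ≡ 0` (resp. `i ≡ 1`)
is the only common closed neighbour of its rung and of `(i + 1, j)` (resp. `(i - 1, j)`), and a
vertex in a column `i ≡ 2` is the only common closed neighbour of `(i - 1, j)` and `(i + 1, j)`.
-/

def closedNbhd {V : Type*} (G : SimpleGraph V) (v : V) : Set V :=
  insert v (G.neighborSet v)

def IsSIC {V : Type*} (G : SimpleGraph V) (S : Set V) : Prop :=
  (∀ x : V, (closedNbhd G x ∩ S).Nonempty) ∧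
    ∀ u v : V, u ≠ v →
      ((closedNbhd G u ∩ S) \ (closedNbhd G v ∩ S)).Nonempty ∧
      ((closedNbhd G v ∩ S) \ (closedNbhd G u ∩ S)).Nonempty

open SimpleGraph
open scoped Fin.CommRing

section ClosedNbhd
variable {V W : Type*} {G : SimpleGraph V}

lemma mem_closedNbhd_iff {x y : V} : y ∈ closedNbhd G x ↔ y = x ∨ G.Adj x y := Iff.rfl

lemma self_mem_closedNbhd (x : V) : x ∈ closedNbhd G x := Set.mem_insert x _

lemma mem_closedNbhd_comm {x y : V} : y ∈ closedNbhd G x ↔ x ∈ closedNbhd G y := by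
  rw [mem_closedNbhd_iff, mem_closedNbhd_iff, eq_comm, G.adj_comm]

lemma mem_closedNbhd_boxProd_top {x y : V × W} :
    y ∈ closedNbhd (G □ ⊤) x ↔ y.1 = x.1 ∨ y.2 = x.2 ∧ y.1 ∈ closedNbhd G x.1 := by
  obtain ⟨a, b⟩ := x
  obtain ⟨c, d⟩ := y
  simp only [mem_closedNbhd_iff, boxProd_adj, top_adj, Prod.mk.injEq]
  grind

theorem isSIC_iff [Nontrivial V] {S : Set V} :
    IsSIC G S ↔ ∀ u v, u ≠ v → ∃ s ∈ S, s ∈ closedNbhd G u ∧ s ∉ closedNbhd G v := by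
  constructor
  · rintro ⟨-, hS⟩ u v huv
    obtain ⟨s, ⟨hsu, hs⟩, hsv⟩ := (hS u v huv).1
    exact ⟨s, hs, hsu, fun h => hsv ⟨h, hs⟩⟩
  · intro h
    refine ⟨fun x => ?_, fun u v huv => ⟨?_, ?_⟩⟩
    · obtain ⟨y, hy⟩ := exists_ne x
      obtain ⟨s, hs, hsx, -⟩ := h x y hy.symm
      exact ⟨s, hsx, hs⟩
    · obtain ⟨s, hs, hsu, hsv⟩ := h u v huv
      exact ⟨s, ⟨hsu, hs⟩, fun h => hsv h.1⟩
    · obtain ⟨s, hs, hsv, hsu⟩ := h v u huv.symm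
      exact ⟨s, ⟨hsv, hs⟩, fun h => hsu h.1⟩

end ClosedNbhd

section Counting
variable {G α : Type*} [AddGroup G] [Fintype G] [Fintype α]

lemma sum_indicator_one_eq_ncard (S : Set α) : ∑ x, S.indicator (1 : α → ℕ) x = S.ncard := by
  classical
  simp [Set.indicator_apply, Finset.sum_boole, Set.ncard_eq_toFinset_card']

lemma sum_indicator_add_right (S : Set (G × α)) (c : G) :
    ∑ x : G × α, S.indicator (1 : G × α → ℕ) (x.1 + c, x.2) = S.ncard :=
  ((Equiv.addRight c).prodCongr (Equiv.refl α)).sum_comp (S.indicator 1) |>.trans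
    (sum_indicator_one_eq_ncard S)

lemma three_mul_ncard_eq_sum_indicator_window (S : Set (G × α)) (d : G) :
    3 * S.ncard = ∑ x : G × α,
      (S.indicator 1 (x.1 - d, x.2) + S.indicator 1 x + S.indicator 1 (x.1 + d, x.2) : ℕ) := by
  simp only [Finset.sum_add_distrib, sub_eq_add_neg, sum_indicator_add_right,
    sum_indicator_one_eq_ncard]
  ring

end Counting

lemma mem_closedNbhd_cycleGraph {n : ℕ} {x a : Fin (n + 2)} :
    a ∈ closedNbhd (cycleGraph (n + 2)) x ↔ a = x ∨ a = x - 1 ∨ a = x + 1 := by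
  rw [closedNbhd, Set.mem_insert_iff, cycleGraph_neighborSet, Set.mem_insert_iff,
    Set.mem_singleton_iff]

lemma eq_of_mem_closedNbhd_cycleGraph_sub_add {n : ℕ} (hn : 3 ≤ n) {x a : Fin (n + 2)}
    (h₁ : a ∈ closedNbhd (cycleGraph (n + 2)) (x - 1))
    (h₂ : a ∈ closedNbhd (cycleGraph (n + 2)) (x + 1)) : a = x := by
  have hc (c : ℕ) (h0 : 0 < c) (h5 : c < 5) : (c : Fin (n + 2)) ≠ 0 := by
    rw [Ne, Fin.natCast_eq_zero]; exact Nat.not_dvd_of_pos_of_lt h0 (by omega)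
  rw [mem_closedNbhd_cycleGraph] at h₁ h₂
  rcases h₁ with rfl | rfl | rfl <;> rcases h₂ with h | h | h
  · exact absurd (by push_cast; linear_combination -h) (hc 2 (by norm_num) (by norm_num))
  · exact absurd (by push_cast; linear_combination -h) (hc 1 (by norm_num) (by norm_num))
  · exact absurd (by push_cast; linear_combination -h) (hc 3 (by norm_num) (by norm_num))
  · exact absurd (by push_cast; linear_combination -h) (hc 3 (by norm_num) (by norm_num))
  · exact absurd (by push_cast; linear_combination -h) (hc 2 (by norm_num) (by norm_num))
  · exact absurd (by push_cast; linear_combination -h) (hc 4 (by norm_num) (by norm_num))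
  all_goals exact sub_add_cancel x 1

abbrev prismGraph (N : ℕ) : SimpleGraph (Fin N × Fin 2) := cycleGraph N □ pathGraph 2

lemma mem_closedNbhd_prismGraph {N : ℕ} {x y : Fin N × Fin 2} :
    y ∈ closedNbhd (prismGraph N) x ↔
      y.1 = x.1 ∨ y.2 = x.2 ∧ y.1 ∈ closedNbhd (cycleGraph N) x.1 := by
  rw [prismGraph, pathGraph_two_eq_top, mem_closedNbhd_boxProd_top]

lemma eq_of_mem_closedNbhd_prismGraph_rung {N : ℕ} {i i' : Fin N} {j : Fin 2}
    {v : Fin N × Fin 2} (hi : i' ≠ i) (h₁ : (i, j) ∈ closedNbhd (prismGraph N) v)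
    (h₂ : (i, j + 1) ∈ closedNbhd (prismGraph N) v) (h₃ : (i', j) ∈ closedNbhd (prismGraph N) v) :
    v = (i, j) := by
  obtain ⟨a, b⟩ := v
  simp only [mem_closedNbhd_prismGraph] at h₁ h₂ h₃
  have ha : i = a := by
    rcases h₁ with h | ⟨h, -⟩
    · exact h
    · exact h₂.resolve_right fun h' => by omega
  exact Prod.ext ha.symm (h₃.resolve_left (ha ▸ hi)).1.symm

section Prism
variable {n : ℕ}

lemma eq_of_sub_add_mem_closedNbhd_prismGraph (hn : 3 ≤ n) {i : Fin (n + 2)} {j : Fin 2}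
    {v : Fin (n + 2) × Fin 2} (h₁ : (i - 1, j) ∈ closedNbhd (prismGraph (n + 2)) v)
    (h₂ : (i + 1, j) ∈ closedNbhd (prismGraph (n + 2)) v) : v = (i, j) := by
  rw [mem_closedNbhd_comm, mem_closedNbhd_prismGraph] at h₁ h₂
  have hc₁ : v.1 ∈ closedNbhd (cycleGraph (n + 2)) (i - 1) := by
    rcases h₁ with h | ⟨-, h⟩
    · exact h ▸ self_mem_closedNbhd _
    · exact h
  have hc₂ : v.1 ∈ closedNbhd (cycleGraph (n + 2)) (i + 1) := by
    rcases h₂ with h | ⟨-, h⟩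
    · exact h ▸ self_mem_closedNbhd _
    · exact h
  have h1 := eq_of_mem_closedNbhd_cycleGraph_sub_add hn hc₁ hc₂
  refine Prod.ext h1 (h₁.resolve_left fun h => ?_).1
  rw [h1, eq_comm, sub_eq_self] at h
  exact one_ne_zero h

variable {S : Set (Fin (n + 2) × Fin 2)}

lemma IsSIC.sub_mem_or_add_mem (hS : IsSIC (prismGraph (n + 2)) S) (i : Fin (n + 2)) (j : Fin 2) :
    (i - 1, j) ∈ S ∨ (i + 1, j) ∈ S := by
  obtain ⟨⟨a, b⟩, hs, hu, hv⟩ := isSIC_iff.1 hS (i, j) (i, j + 1) (by simp)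
  simp only [mem_closedNbhd_prismGraph, mem_closedNbhd_cycleGraph, not_or] at hu hv
  rcases hu with h | ⟨rfl, h | rfl | rfl⟩
  · exact absurd h hv.1
  · exact absurd h hv.1
  · exact Or.inl hs
  · exact Or.inr hs

lemma IsSIC.mem_or_add_mem (hS : IsSIC (prismGraph (n + 2)) S) (i : Fin (n + 2)) (j : Fin 2) :
    (i, j) ∈ S ∨ (i + 1, j) ∈ S := by
  obtain ⟨⟨a, b⟩, hs, hu, hv⟩ := isSIC_iff.1 hS (i, j) (i - 1, j + 1) (by simp)
  simp only [mem_closedNbhd_prismGraph, mem_closedNbhd_cycleGraph, not_or, not_and] at hu hv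
  obtain ⟨hai, hv⟩ := hv
  rcases hu with rfl | ⟨rfl, rfl | rfl | rfl⟩
  · obtain rfl | rfl : b = j ∨ b = j + 1 := by omega
    · exact Or.inl hs
    · exact absurd (sub_add_cancel a 1).symm (hv rfl).2.2
  · exact Or.inl hs
  · exact absurd rfl hai
  · exact Or.inr hs

lemma IsSIC.two_le_indicator_window (hS : IsSIC (prismGraph (n + 2)) S) (i : Fin (n + 2))
    (j : Fin 2) :
    2 ≤ (S.indicator 1 (i - 1, j) + S.indicator 1 (i, j) + S.indicator 1 (i + 1, j) : ℕ) := by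
  have h₁ := hS.sub_mem_or_add_mem i j
  have h₂ := hS.mem_or_add_mem i j
  have h₃ := hS.mem_or_add_mem (i - 1) j
  rw [sub_add_cancel] at h₃
  classical
  simp only [Set.indicator_apply, Pi.one_apply]
  split_ifs <;> tauto

end Prism

lemma IsSIC.four_mul_le_three_mul_ncard {n : ℕ} {S : Set (Fin (n + 2) × Fin 2)}
    (hS : IsSIC (prismGraph (n + 2)) S) : 4 * (n + 2) ≤ 3 * S.ncard := by
  rw [three_mul_ncard_eq_sum_indicator_window S 1]
  calc 4 * (n + 2) = ∑ _x : Fin (n + 2) × Fin 2, 2 := by simp; ring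
    _ ≤ _ := Finset.sum_le_sum fun x _ => hS.two_le_indicator_window x.1 x.2

section Code
variable {n : ℕ}

def twoOfThreeColumns (N : ℕ) : Set (Fin N × Fin 2) := {x | x.1.val % 3 ≠ 2}

lemma val_add_one_mod_three (h3 : 3 ∣ n + 2) (i : Fin (n + 2)) :
    (i + 1).val % 3 = (i.val + 1) % 3 := by
  rw [Fin.val_add, Fin.val_one, Nat.mod_mod_of_dvd _ h3]

lemma val_sub_one_mod_three (h3 : 3 ∣ n + 2) (i : Fin (n + 2)) :
    (i - 1).val % 3 = (i.val + 2) % 3 := by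
  rw [Fin.val_sub, Fin.val_one, Nat.mod_mod_of_dvd _ h3]
  omega

lemma indicator_window_twoOfThreeColumns (h3 : 3 ∣ n + 2) (i : Fin (n + 2)) (j : Fin 2) :
    ((twoOfThreeColumns (n + 2)).indicator 1 (i - 1, j) +
      (twoOfThreeColumns (n + 2)).indicator 1 (i, j) +
      (twoOfThreeColumns (n + 2)).indicator 1 (i + 1, j) : ℕ) = 2 := by
  classical
  have h₁ := val_sub_one_mod_three h3 i
  have h₂ := val_add_one_mod_three h3 i
  simp only [Set.indicator_apply, Pi.one_apply, twoOfThreeColumns, Set.mem_ofPred_eq]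
  split_ifs <;> omega

lemma three_mul_ncard_twoOfThreeColumns (h3 : 3 ∣ n + 2) :
    3 * (twoOfThreeColumns (n + 2)).ncard = 4 * (n + 2) := by
  rw [three_mul_ncard_eq_sum_indicator_window _ 1]
  simp only [indicator_window_twoOfThreeColumns h3, Finset.sum_const, Finset.card_univ,
    Fintype.card_prod, Fintype.card_fin, smul_eq_mul]
  ring

lemma isSIC_twoOfThreeColumns (h3 : 3 ∣ n + 2) (hn : 3 ≤ n) :
    IsSIC (prismGraph (n + 2)) (twoOfThreeColumns (n + 2)) := by
  refine isSIC_iff.2 fun u v huv => ?_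
  by_contra! hcov
  obtain ⟨i, j⟩ := u
  have hN {a : Fin (n + 2)} {b : Fin 2} (hab : (a, b) ∈ closedNbhd (prismGraph (n + 2)) (i, j))
      (ha : a.val % 3 ≠ 2) : (a, b) ∈ closedNbhd (prismGraph (n + 2)) v := hcov _ ha hab
  have h₁ := val_sub_one_mod_three h3 i
  have h₂ := val_add_one_mod_three h3 i
  refine huv (Eq.symm ?_)
  obtain h | h | h : i.val % 3 = 0 ∨ i.val % 3 = 1 ∨ i.val % 3 = 2 := by omega
  · refine eq_of_mem_closedNbhd_prismGraph_rung (i' := i + 1) (by simp)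
      (hN (self_mem_closedNbhd _) (by omega)) (hN ?_ (by omega)) (hN ?_ (by omega)) <;>
      simp [mem_closedNbhd_prismGraph, mem_closedNbhd_cycleGraph]
  · refine eq_of_mem_closedNbhd_prismGraph_rung (i' := i - 1) (by simp)
      (hN (self_mem_closedNbhd _) (by omega)) (hN ?_ (by omega)) (hN ?_ (by omega)) <;>
      simp [mem_closedNbhd_prismGraph, mem_closedNbhd_cycleGraph]
  · refine eq_of_sub_add_mem_closedNbhd_prismGraph hn (hN ?_ (by omega)) (hN ?_ (by omega)) <;>
      simp [mem_closedNbhd_prismGraph, mem_closedNbhd_cycleGraph]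

end Code

theorem stmt_17 (k : ℕ) (hk : 2 ≤ k) :
    sInf {m : ℕ | ∃ S : Set (Fin (3 * k) × Fin 2),
      IsSIC (SimpleGraph.cycleGraph (3 * k) □ SimpleGraph.pathGraph 2) S ∧
        S.ncard = m} = 4 * k := by
  obtain ⟨n, hn⟩ : ∃ n, 3 * k = n + 2 := ⟨3 * k - 2, by omega⟩
  have h3 : 3 ∣ n + 2 := hn ▸ dvd_mul_right 3 k
  rw [hn]
  refine IsLeast.csInf_eq ⟨⟨twoOfThreeColumns (n + 2), isSIC_twoOfThreeColumns h3 (by omega), ?_⟩, ?_⟩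
  · have := three_mul_ncard_twoOfThreeColumns h3
    omega
  · rintro m ⟨S, hS, rfl⟩
    have := hS.four_mul_le_three_mul_ncard
    omega
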